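/- arXiv:0908.4492 — 4 statements merged into one kernel-verified Lean document; each statement's English description precedes it below -/
import Mathlib

section
/- Let A be a small additive category and F : A ‚Üí k-Mod a functor. If the d-th cross effect cr_d(F) : F ‚Üí ŌĄ_d F vanishes, then cr_i(F) = 0 for every i ‚Č• d, where ŌĄ_d is precomposition with t_d : a ‚Ü¶ a^{‚äē(d+1)} and cr_d(F) = ő£_{I ‚äÜ {0,...,d}} (‚ąí1)^{|I|} (u_I)_* with u_I : a ‚Üí a^{‚äē(d+1)} the natural map whose i-th component is the identity if i ‚àą I and 0 otherwise. -/
open CategoryTheory CategoryTheory.Limits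

noncomputable section

variable {A : Type*} [Category A] [Preadditive A] [HasFiniteBiproducts A]
variable {D : Type*} [Category D] [Preadditive D]

/-- `t d : a ↦ a^{⊕(d+1)}` -/
@[simps] def tFun (A : Type*) [Category A] [Preadditive A] [HasFiniteBiproducts A] (d : ℕ) :
    A ⥤ A where
  obj a := ⨁ (fun _ : Fin (d + 1) => a)
  map f := biproduct.map (fun _ => f)

/-- `u_I : id ⟶ t_d` -/
@[simps] def uNat (A : Type*) [Category A] [Preadditive A] [HasFiniteBiproducts A] (d : ℕ)
    (I : Finset (Fin (d + 1))) : 𝟭 A ⟶ tFun A d where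
  app a := biproduct.lift (fun i => if i ∈ I then 𝟙 a else 0)
  naturality a b f := by
    refine biproduct.hom_ext _ _ fun j => ?_
    by_cases h : j ∈ I <;> simp [h, tFun]

/-- `p_I : t_d ⟶ id` -/
@[simps] def pNat (A : Type*) [Category A] [Preadditive A] [HasFiniteBiproducts A] (d : ℕ)
    (I : Finset (Fin (d + 1))) : tFun A d ⟶ 𝟭 A where
  app a := biproduct.desc (fun i => if i ∈ I then 𝟙 a else 0)
  naturality a b f := by
    refine biproduct.hom_ext' _ _ fun j => ?_
    by_cases h : j ∈ I <;> simp [h, tFun]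

/-- the cross effect `cr_d(F) : F ⟶ τ_d F` -/
@[simps] def crNat (d : ℕ) (F : A ⥤ D) : F ⟶ tFun A d ⋙ F where
  app a := ∑ I : Finset (Fin (d + 1)), (-1 : ℤ) ^ I.card • F.map ((uNat A d I).app a)
  naturality a b f := by
    simp only [Functor.comp_map, Preadditive.comp_sum, Preadditive.sum_comp,
      Preadditive.comp_zsmul, Preadditive.zsmul_comp]
    refine Finset.sum_congr rfl (fun I _ => ?_)
    have h := (uNat A d I).naturality f
    simp only [Functor.id_map] at h
    rw [← F.map_comp, ← F.map_comp, h]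

/-- the co-cross effect `cr_d^{op}(F) : τ_d F ⟶ F` -/
@[simps] def crOpNat (d : ℕ) (F : A ⥤ D) : tFun A d ⋙ F ⟶ F where
  app a := ∑ I : Finset (Fin (d + 1)), (-1 : ℤ) ^ I.card • F.map ((pNat A d I).app a)
  naturality a b f := by
    simp only [Functor.comp_map, Preadditive.comp_sum, Preadditive.sum_comp,
      Preadditive.comp_zsmul, Preadditive.zsmul_comp]
    refine Finset.sum_congr rfl (fun I _ => ?_)
    have h := (pNat A d I).naturality f
    simp only [Functor.id_map] at h
    rw [← F.map_comp, ← F.map_comp, h]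

/-- `F` is polynomial of degree at most `d`. -/
def PolyDeg (d : ℕ) (F : A ⥤ D) : Prop := crNat d F = 0

end

/-!
Write `Δₙ(c; f) = ∑_{T ⊆ {0,…,n-1}} (-1)^{|T|} F(c + ∑_{i ∈ T} fᵢ)` (`altSum`) for morphisms
`c, fᵢ : a ⟶ b`. Composing `cr_n(F)` with `F` of the morphism `a^{⊕(n+1)} ⟶ b` with components
`fᵢ` gives `Δ_{n+1}(0; f)`, and `cr_n(F)_a` itself is `Δ_{n+1}(0; ι)` for the biproduct injections `ι`.
Splitting off the first index gives `Δ_{m+1}(c; f₀, f) = Δ_m(c; f) - Δ_m(c + f₀; f)`.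
So if `cr_n(F) = 0`, the vanishing of `Δ_{n+1}(0; c, f)` says that `Δ_n(c; f)` does not depend
on `c`; hence `Δ_{n+1}(c; f) = 0` for every `c`, then `Δ_{n+2}(0; f) = 0`, i.e. `cr_{n+1}(F) = 0`.
-/

open Finset

noncomputable section

variable {A : Type*} [Category A] [Preadditive A]
variable {D : Type*} [Category D] [Preadditive D]

def altSum (F : A ⥤ D) {ι : Type*} (s : Finset ι) {a b : A} (c : a ⟶ b) (f : ι → (a ⟶ b)) :
    F.obj a ⟶ F.obj b :=
  ∑ T ∈ s.powerset, (-1 : ℤ) ^ #T • F.map (c + ∑ i ∈ T, f i)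

section altSum

variable (F : A ⥤ D) {ι : Type*} {a b : A}

lemma altSum_insert [DecidableEq ι] {s : Finset ι} {j : ι} (hj : j ∉ s) (c : a ⟶ b)
    (f : ι → (a ⟶ b)) :
    altSum F (insert j s) c f = altSum F s c f - altSum F s (c + f j) f := by
  rw [altSum, altSum, altSum, sum_powerset_insert hj, sub_eq_add_neg, ← sum_neg_distrib]
  congr 1
  refine sum_congr rfl fun T hT => ?_
  have hjT : j ∉ T := fun h => hj (mem_powerset.1 hT h)
  rw [card_insert_of_notMem hjT, sum_insert hjT, pow_succ, mul_neg_one, neg_smul, add_assoc]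

lemma altSum_image {κ : Type*} [DecidableEq ι] {e : κ → ι} (he : Function.Injective e)
    (s : Finset κ) (c : a ⟶ b) (f : ι → (a ⟶ b)) :
    altSum F (s.image e) c f = altSum F s c (f ∘ e) := by
  rw [altSum, altSum, powerset_image, sum_image fun _ _ _ _ h => image_injective he h]
  refine sum_congr rfl fun T _ => ?_
  rw [card_image_of_injective T he, sum_image he.injOn]
  rfl

lemma altSum_comp_map (s : Finset ι) (c : a ⟶ b) (f : ι → (a ⟶ b)) {b' : A} (g : b ⟶ b') :
    altSum F s c f ≫ F.map g = altSum F s (c ≫ g) (fun i => f i ≫ g) := by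
  simp only [altSum, Preadditive.sum_comp, Preadditive.zsmul_comp, ← F.map_comp,
    Preadditive.add_comp]

lemma altSum_univ_succ {n : ℕ} (c : a ⟶ b) (f : Fin (n + 1) → (a ⟶ b)) :
    altSum F univ c f =
      altSum F univ c (f ∘ Fin.succ) - altSum F univ (c + f 0) (f ∘ Fin.succ) := by
  rw [Fin.univ_succ, cons_eq_insert, map_eq_image, Function.Embedding.coeFn_mk,
    altSum_insert F (by simp), altSum_image F (Fin.succ_injective n),
    altSum_image F (Fin.succ_injective n)]

end altSum

variable [HasFiniteBiproducts A]

lemma uNat_app_eq_sum (n : ℕ) (I : Finset (Fin (n + 1))) (a : A) :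
    (uNat A n I).app a = ∑ i ∈ I, biproduct.ι (fun _ : Fin (n + 1) => a) i := by
  refine biproduct.hom_ext _ _ fun j => ?_
  by_cases hj : j ∈ I <;> simp [hj, Preadditive.sum_comp, biproduct.ι_π]

lemma crNat_app_eq_altSum (n : ℕ) (F : A ⥤ D) (a : A) :
    (crNat n F).app a = altSum F univ 0 (biproduct.ι fun _ : Fin (n + 1) => a) := by
  simp only [crNat_app, uNat_app_eq_sum, altSum, powerset_univ, zero_add]
  rfl

section VanishingCrossEffect

variable {n : ℕ} {F : A ⥤ D}

lemma altSum_zero_eq_zero_of_crNat_eq_zero (h : crNat n F = 0) {a b : A}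
    (f : Fin (n + 1) → (a ⟶ b)) :
    altSum F univ 0 f = 0 :=
  calc altSum F univ 0 f
      = altSum F univ (0 ≫ biproduct.desc f) (fun i => biproduct.ι _ i ≫ biproduct.desc f) := by
        simp
    _ = (crNat n F).app a ≫ F.map (biproduct.desc f) := by
        rw [crNat_app_eq_altSum]
        exact (altSum_comp_map F _ _ _ _).symm
    _ = 0 := by simp [h]

lemma altSum_eq_altSum_zero_of_crNat_eq_zero (h : crNat n F = 0) {a b : A}
    (c : a ⟶ b) (f : Fin n → (a ⟶ b)) :
    altSum F univ c f = altSum F univ 0 f := by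
  have hcons := altSum_zero_eq_zero_of_crNat_eq_zero h (Fin.cons c f)
  rw [altSum_univ_succ, Fin.cons_zero, Fin.cons_comp_succ, zero_add, sub_eq_zero] at hcons
  exact hcons.symm

lemma altSum_eq_zero_of_crNat_eq_zero (h : crNat n F = 0) {a b : A}
    (c : a ⟶ b) (f : Fin (n + 1) → (a ⟶ b)) :
    altSum F univ c f = 0 := by
  rw [altSum_univ_succ, altSum_eq_altSum_zero_of_crNat_eq_zero h,
    altSum_eq_altSum_zero_of_crNat_eq_zero h (c + f 0), sub_self]

lemma crNat_succ_eq_zero (h : crNat n F = 0) : crNat (n + 1) F = 0 := by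
  ext a
  rw [crNat_app_eq_altSum, altSum_univ_succ, altSum_eq_zero_of_crNat_eq_zero h,
    altSum_eq_zero_of_crNat_eq_zero h, sub_zero]
  rfl

end VanishingCrossEffect

lemma PolyDeg.mono {d i : ℕ} {F : A ⥤ D} (hF : PolyDeg d F) (hdi : d ≤ i) : PolyDeg i F := by
  induction i, hdi using Nat.le_induction with
  | base => exact hF
  | succ n _ ih => exact crNat_succ_eq_zero ih

end

/-- If the `d`-th cross effect of `F : A ⥤ k-Mod` vanishes then so does `cr_i(F)` for all
`i ≥ d`. -/
theorem stmt2 (k : Type) [CommRing k] (A : Type) [SmallCategory A] [Preadditive A]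
    [HasFiniteBiproducts A] (d : ℕ) (F : A ⥤ ModuleCat k)
    (h : crNat d F = 0) :
    ∀ i : ℕ, d ≤ i → crNat i F = 0 :=
  fun _ => PolyDeg.mono h
end

section
/- There exists an involutive natural transformation ő≥ : ŌĄ_d¬≤ ‚Üí ŌĄ_d¬≤ on the functor category Fct(A, k-Mod) satisfying ő≥ ‚ąė ŌĄ_d(cr_d) = cr_d(ŌĄ_d), i.e. ő≥ exchanges the two ways of iterating the cross-effect inclusion. -/
/-!
Take `γ` to be whiskering with the swap of the two summation indices of
`t_d (t_d a) = (a^{⊕(d+1)})^{⊕(d+1)}`, which is natural in `a` and involutive. Each inclusion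
`u_I` has diagonal components, so the swap carries `u_I` at `t_d a` to `t_d (u_I)` at `a`;
applying `F` and summing with the signs `(-1)^|I|` turns `τ_d(cr_d)` into `cr_d(τ_d)`.
-/

open CategoryTheory CategoryTheory.Limits

noncomputable section

variable (k : Type) [CommRing k] (A : Type) [SmallCategory A] [Preadditive A]
  [HasFiniteBiproducts A]

/-- `τ_d`, precomposition with `t_d`, as an endofunctor of the functor category. -/
def tauFun (d : ℕ) : (A ⥤ ModuleCat k) ⥤ (A ⥤ ModuleCat k) :=
  (Functor.whiskeringLeft A A (ModuleCat k)).obj (tFun A d)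

section BiproductSwap

variable {C : Type*} [Category C] [Preadditive C] [HasFiniteBiproducts C] {ι : Type*} [Finite ι]

def biproductSwap (a : C) :
    (⨁ fun _ : ι => ⨁ fun _ : ι => a) ⟶ ⨁ fun _ : ι => ⨁ fun _ : ι => a :=
  biproduct.lift fun j => biproduct.lift fun i => biproduct.π _ i ≫ biproduct.π _ j

theorem biproductSwap_comp_self (a : C) :
    biproductSwap (ι := ι) a ≫ biproductSwap a = 𝟙 _ := by
  refine biproduct.hom_ext _ _ fun j => biproduct.hom_ext _ _ fun i => ?_
  simp [biproductSwap]

theorem biproduct_map_map_comp_biproductSwap {a b : C} (f : a ⟶ b) :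
    (biproduct.map fun _ : ι => biproduct.map fun _ : ι => f) ≫ biproductSwap b =
      biproductSwap a ≫ biproduct.map fun _ => biproduct.map fun _ => f := by
  refine biproduct.hom_ext _ _ fun j => biproduct.hom_ext _ _ fun i => ?_
  simp [biproductSwap]

theorem biproduct_lift_comp_biproductSwap {a : C} (c : ι → (a ⟶ a)) :
    (biproduct.lift fun i => biproduct.map fun _ : ι => c i) ≫ biproductSwap a =
      biproduct.map fun _ => biproduct.lift c := by
  refine biproduct.hom_ext _ _ fun j => biproduct.hom_ext _ _ fun i => ?_
  simp [biproductSwap]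

end BiproductSwap

section SwapNat

variable {C : Type*} [Category C] [Preadditive C] [HasFiniteBiproducts C] (d : ℕ)

/-- In the paper's notation, the swap of the two factors `ℤ^{d+1}` of `a ⊗ ℤ^{d+1} ⊗ ℤ^{d+1}`. -/
def swapNat : tFun C d ⋙ tFun C d ⟶ tFun C d ⋙ tFun C d where
  app a := biproductSwap a
  naturality _ _ f := biproduct_map_map_comp_biproductSwap f

theorem swapNat_comp_self : swapNat d ≫ swapNat d = 𝟙 (tFun C d ⋙ tFun C d) := by
  ext a
  exact biproductSwap_comp_self a

theorem uNat_app_tFun_comp_swapNat_app (I : Finset (Fin (d + 1))) (a : C) :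
    (uNat C d I).app ((tFun C d).obj a) ≫ (swapNat d).app a =
      (tFun C d).map ((uNat C d I).app a) := by
  have hu : (uNat C d I).app ((tFun C d).obj a) =
      biproduct.lift fun i => biproduct.map fun _ => if i ∈ I then 𝟙 a else 0 := by
    change biproduct.lift (fun i => if i ∈ I then 𝟙 (⨁ fun _ : Fin (d + 1) => a) else 0) = _
    congr 1
    funext i
    split_ifs <;> exact biproduct.hom_ext _ _ fun j => by simp
  rw [hu]
  exact biproduct_lift_comp_biproductSwap _

theorem crNat_app_tFun_comp_map_swapNat_app {D : Type*} [Category D] [Preadditive D]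
    (F : C ⥤ D) (a : C) :
    (crNat d F).app ((tFun C d).obj a) ≫ F.map ((swapNat d).app a) =
      (crNat d (tFun C d ⋙ F)).app a := by
  simp only [crNat_app, Preadditive.sum_comp, Preadditive.zsmul_comp, ← F.map_comp,
    uNat_app_tFun_comp_swapNat_app, Functor.comp_map]

end SwapNat

/-- There is an involutive natural transformation `γ : τ_d² ⟶ τ_d²` with
`γ ∘ τ_d(cr_d) = cr_d(τ_d)`. -/
theorem stmt7 (d : ℕ) :
    ∃ γ : ∀ F : A ⥤ ModuleCat k,
        (tauFun k A d).obj ((tauFun k A d).obj F) ⟶ (tauFun k A d).obj ((tauFun k A d).obj F),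
      -- naturality of `γ`
      (∀ (F G : A ⥤ ModuleCat k) (f : F ⟶ G),
        (tauFun k A d).map ((tauFun k A d).map f) ≫ γ G =
          γ F ≫ (tauFun k A d).map ((tauFun k A d).map f)) ∧
      -- `γ` is involutive
      (∀ F : A ⥤ ModuleCat k, γ F ≫ γ F = 𝟙 _) ∧
      -- `γ ∘ τ_d(cr_d) = cr_d(τ_d)`
      (∀ F : A ⥤ ModuleCat k,
        (tauFun k A d).map (crNat d F) ≫ γ F = crNat d ((tauFun k A d).obj F)) := by
  let γ := (Functor.whiskeringLeft A A (ModuleCat k)).map (swapNat d)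
  refine ⟨γ.app, fun _ _ f => γ.naturality f, fun F => ?_,
    fun F => NatTrans.ext (funext (crNat_app_tFun_comp_map_swapNat_app d F))⟩
  refine (Functor.whiskerRight_comp _ _ F).symm.trans ?_
  rw [swapNat_comp_self, Functor.whiskerRight_id']
  rfl

end
end

section
/- Let M‚āÄ(A) be the subcategory of a small additive category A whose morphisms are the zero morphisms and the split monomorphisms, and őł the restriction functor Fct(A,k-Mod) ‚Üí Fct(M‚āÄ(A),k-Mod). Say F satisfies (RM)^d if őł(cr_d(F)) is a split monomorphism. If f : F ‚Üí G is a morphism between functors satisfying (RM)^d together with chosen retractions r_F, r_G that commute with őł(f) (i.e. r_G ‚ąė őłŌĄ_d(f) = őł(f) ‚ąė r_F), then both ker(f) and coker(f) satisfy (RM)^d. -/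
/-!
Restriction along `M₀(A) ⥤ A`, and along `τ_d`, is precomposition, so it preserves kernels and
cokernels, and `cr_d` is natural. Hence `θ(ker f) ⟶ θ(F)` is a kernel of `θ(f)`, and a retraction
of `θ(cr_d(ker f))` is the lift of `θτ_d(ker f ⟶ F) ≫ r_F`, which exists because
`r_F ≫ θ(f) = θτ_d(f) ≫ r_G` kills it. Dually `r_G` descends to a retraction on cokernels.
-/
open CategoryTheory CategoryTheory.Limits

section M0

variable (B : Type*) [Category B] [Limits.HasZeroMorphisms B]

/-- `M₀(B)` : same objects as `B`, morphisms the zero morphisms and split monomorphisms. -/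
def M0 := B

instance : Category (M0 B) where
  Hom a b := {f : (show B from a) ⟶ (show B from b) // f = 0 ∨ IsSplitMono f}
  id a := ⟨𝟙 _, Or.inr inferInstance⟩
  comp {a b c} f g := ⟨f.1 ≫ g.1, by
    rcases f.2 with hf | hf
    · exact Or.inl (by rw [hf, Limits.zero_comp])
    · rcases g.2 with hg | hg
      · exact Or.inl (by rw [hg, Limits.comp_zero])
      · exact Or.inr (by haveI := hf; haveI := hg; infer_instance)⟩
  id_comp f := Subtype.ext (Category.id_comp f.1)
  comp_id f := Subtype.ext (Category.comp_id f.1)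
  assoc f g h := Subtype.ext (Category.assoc f.1 g.1 h.1)

/-- the inclusion `M₀(B) ⥤ B`. -/
@[simps] def M0.incl : M0 B ⥤ B where
  obj a := a
  map f := f.1

end M0

section Theta

variable {k : Type} [CommRing k] (B : Type*) [Category B] [Limits.HasZeroMorphisms B]

/-- `θ`, the restriction functor along `M₀(B) ⥤ B`. -/
def theta (k : Type) [CommRing k] : (B ⥤ ModuleCat k) ⥤ (M0 B ⥤ ModuleCat k) :=
  (Functor.whiskeringLeft (M0 B) B (ModuleCat k)).obj (M0.incl B)

end Theta

section RM

variable {k : Type} [CommRing k] {A : Type*} [Category A] [Preadditive A]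
  [Limits.HasFiniteBiproducts A]

/-- condition `(RM)^d` : the restriction of the cross effect to `M₀(A)` is a split mono. -/
def RM (d : ℕ) (F : A ⥤ ModuleCat k) : Prop :=
  ∃ r : (theta A k).obj (tFun A d ⋙ F) ⟶ (theta A k).obj F,
    (theta A k).map (crNat d F) ≫ r = 𝟙 _

end RM

noncomputable section

variable {k : Type} [CommRing k] {A : Type} [SmallCategory A] [Preadditive A]
  [Limits.HasFiniteBiproducts A]

section RetractionsOfKernels

variable {C : Type*} [Category C] [HasZeroMorphisms C]

theorem exists_comp_eq_id_of_isLimit_kernelFork {X Y K' X' Y' : C} {f : X ⟶ Y}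
    {c : KernelFork f} (hc : IsLimit c) {f' : X' ⟶ Y'} {i' : K' ⟶ X'} (w' : i' ≫ f' = 0)
    {sK : c.pt ⟶ K'} {sX : X ⟶ X'} (hs : sK ≫ i' = c.ι ≫ sX)
    {rX : X' ⟶ X} {rY : Y' ⟶ Y} (hrX : sX ≫ rX = 𝟙 X) (compat : f' ≫ rY = rX ≫ f) :
    ∃ rK : K' ⟶ c.pt, sK ≫ rK = 𝟙 c.pt := by
  obtain ⟨rK, hrK⟩ := KernelFork.IsLimit.lift' hc (i' ≫ rX) <| by
    rw [Category.assoc, ← compat, reassoc_of% w', zero_comp]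
  have : Mono c.ι := mono_of_isLimit_fork hc
  refine ⟨rK, ?_⟩
  rw [← cancel_mono c.ι, Category.assoc, hrK, reassoc_of% hs, hrX, Category.comp_id,
    Category.id_comp]

theorem exists_comp_eq_id_of_isColimit_cokernelCofork {X Y X' Y' : C} {f : X ⟶ Y}
    {c : CokernelCofork f} (hc : IsColimit c) {f' : X' ⟶ Y'} {c' : CokernelCofork f'}
    (hc' : IsColimit c') {sY : Y ⟶ Y'} {sQ : c.pt ⟶ c'.pt} (hs : c.π ≫ sQ = sY ≫ c'.π)
    {rX : X' ⟶ X} {rY : Y' ⟶ Y} (hrY : sY ≫ rY = 𝟙 Y) (compat : f' ≫ rY = rX ≫ f) :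
    ∃ rQ : c'.pt ⟶ c.pt, sQ ≫ rQ = 𝟙 c.pt := by
  obtain ⟨rQ, hrQ⟩ := CokernelCofork.IsColimit.desc' hc' (rY ≫ c.π) <| by
    rw [reassoc_of% compat, CokernelCofork.condition, comp_zero]
  have : Epi c.π := epi_of_isColimit_cofork hc
  refine ⟨rQ, ?_⟩
  rw [← cancel_epi c.π, reassoc_of% hs, hrQ, reassoc_of% hrY, Category.comp_id]

end RetractionsOfKernels

theorem crNat_comp_whiskerLeft {A : Type*} [Category A] [Preadditive A] [HasFiniteBiproducts A]
    {D : Type*} [Category D] [Preadditive D] (d : ℕ) {F G : A ⥤ D} (f : F ⟶ G) :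
    crNat d F ≫ Functor.whiskerLeft (tFun A d) f = f ≫ crNat d G := by
  ext a
  simp only [NatTrans.comp_app, crNat_app, Functor.whiskerLeft_app, Preadditive.sum_comp,
    Preadditive.comp_sum, Preadditive.zsmul_comp, Preadditive.comp_zsmul]
  exact Finset.sum_congr rfl fun I _ => by rw [f.naturality]; rfl

section ThetaPreserves

universe v

variable (B : Type*) [Category B] [HasZeroMorphisms B]

instance (J : Type*) [Category J] [HasLimitsOfShape J (ModuleCat.{v} k)] :
    PreservesLimitsOfShape J (theta.{_, _, v} B k) :=
  whiskeringLeft_preservesLimitsOfShape J _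

instance (J : Type*) [Category J] [HasColimitsOfShape J (ModuleCat.{v} k)] :
    PreservesColimitsOfShape J (theta.{_, _, v} B k) :=
  whiskeringLeft_preservesColimitsOfShape J _

end ThetaPreserves

/-- Kernels and cokernels of `(RM)^d`-compatible morphisms satisfy `(RM)^d`. -/
theorem stmt8 (d : ℕ) (F G : A ⥤ ModuleCat k) (f : F ⟶ G)
    (rF : (theta A k).obj (tFun A d ⋙ F) ⟶ (theta A k).obj F)
    (rG : (theta A k).obj (tFun A d ⋙ G) ⟶ (theta A k).obj G)
    (hrF : (theta A k).map (crNat d F) ≫ rF = 𝟙 _)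
    (hrG : (theta A k).map (crNat d G) ≫ rG = 𝟙 _)
    (compat : (theta A k).map (Functor.whiskerLeft (tFun A d) f) ≫ rG = rF ≫ (theta A k).map f) :
    RM d (kernel f) ∧ RM d (cokernel f) := by
  let θτ := (Functor.whiskeringLeft A A (ModuleCat k)).obj (tFun A d) ⋙ theta A k
  have theta_map_crNat_comp {X Y : A ⥤ ModuleCat k} (g : X ⟶ Y) :
      (theta A k).map (crNat d X) ≫ θτ.map g =
        (theta A k).map g ≫ (theta A k).map (crNat d Y) := by
    simp only [θτ, Functor.comp_map, Functor.whiskeringLeft_obj_map, ← Functor.map_comp,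
      crNat_comp_whiskerLeft]
  constructor
  · exact exists_comp_eq_id_of_isLimit_kernelFork
      (isLimitOfHasKernelOfPreservesLimit (theta A k) f)
      ((θτ.map_comp _ _).symm.trans (by rw [kernel.condition, θτ.map_zero]))
      (theta_map_crNat_comp (kernel.ι f)) hrF compat
  · exact exists_comp_eq_id_of_isColimit_cokernelCofork
      (isColimitOfHasCokernelOfPreservesColimit (theta A k) f)
      (isColimitOfHasCokernelOfPreservesColimit θτ f)
      (theta_map_crNat_comp (cokernel.π f)).symm hrG compat

end
end

section
/- If F : A ‚Üí k-Mod satisfies condition (RM)^d (őł(cr_d(F)) is a split monomorphism in Fct(M‚āÄ(A), k-Mod)), then ŌĄ_d F also satisfies (RM)^d, and the retractions can be chosen so that cr_d(F) : F ‚Üí ŌĄ_d F is compatible with them (the square r_{ŌĄ_d F} ‚ąė őłŌĄ_d(cr_d(F)) = őł(cr_d(F)) ‚ąė r_F commutes). -/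
open CategoryTheory CategoryTheory.Limits

/-! The swap `γ` of the two biproduct factors of `τ_d²` carries `τ_d(cr_d F)` to `cr_d(τ_d F)`,
so `τ_d(r_F) ∘ θ(F γ)` is a retraction of `θ(cr_d(τ_d F))`. The compatibility square commutes
because `cr_d` is a signed sum of the maps `F(u_I)` and every `u_I` is zero or a split mono,
i.e. a morphism of `M₀(A)`: any transformation between functors on `M₀(A)` commutes with it. -/

noncomputable section

variable {A : Type*} [Category A] [Preadditive A] [HasFiniteBiproducts A]
  {D : Type*} [Category D]

def tProj (d : ℕ) (a : A) (j : Fin (d + 1)) : (tFun A d).obj a ⟶ a :=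
  biproduct.π _ j

lemma tFun_hom_ext (d : ℕ) {x b : A} {g h : x ⟶ (tFun A d).obj b}
    (w : ∀ j, g ≫ tProj d b j = h ≫ tProj d b j) : g = h :=
  biproduct.hom_ext _ _ w

lemma tFun_hom_ext₂ (d : ℕ) {x b : A} {g h : x ⟶ (tFun A d).obj ((tFun A d).obj b)}
    (w : ∀ i j, g ≫ tProj d _ i ≫ tProj d b j = h ≫ tProj d _ i ≫ tProj d b j) : g = h :=
  tFun_hom_ext d fun i => tFun_hom_ext d fun j => by simpa only [Category.assoc] using w i j

lemma tFun_map_tProj (d : ℕ) {a b : A} (f : a ⟶ b) (j : Fin (d + 1)) :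
    (tFun A d).map f ≫ tProj d b j = tProj d a j ≫ f :=
  biproduct.map_π (fun _ : Fin (d + 1) => f) j

lemma tFun_map_tProj_assoc (d : ℕ) {a b c : A} (f : a ⟶ b) (j : Fin (d + 1)) (g : b ⟶ c) :
    (tFun A d).map f ≫ tProj d b j ≫ g = tProj d a j ≫ f ≫ g := by
  rw [← Category.assoc, tFun_map_tProj, Category.assoc]

lemma uNat_app_tProj (d : ℕ) (I : Finset (Fin (d + 1))) (a : A) (j : Fin (d + 1)) :
    (uNat A d I).app a ≫ tProj d a j = if j ∈ I then 𝟙 a else 0 :=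
  biproduct.lift_π _ _

lemma uNat_app_tProj_assoc (d : ℕ) (I : Finset (Fin (d + 1))) {a b : A} (j : Fin (d + 1))
    (g : a ⟶ b) : (uNat A d I).app a ≫ tProj d a j ≫ g = if j ∈ I then g else 0 := by
  rw [← Category.assoc, uNat_app_tProj]
  split_ifs <;> simp

instance tFun_additive (d : ℕ) : (tFun A d).Additive where
  map_add := tFun_hom_ext d fun j => by
    simp only [Preadditive.add_comp, tFun_map_tProj, Preadditive.comp_add]

def tSwap (d : ℕ) (a : A) :
    (tFun A d).obj ((tFun A d).obj a) ⟶ (tFun A d).obj ((tFun A d).obj a) :=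
  biproduct.lift fun i => (tFun A d).map (tProj d a i)

lemma tSwap_tProj_tProj (d : ℕ) (a : A) (i j : Fin (d + 1)) :
    tSwap d a ≫ tProj d _ i ≫ tProj d a j = tProj d _ j ≫ tProj d a i :=
  (biproduct.lift_π_assoc (fun i => (tFun A d).map (tProj d a i)) i (tProj d a j)).trans
    (tFun_map_tProj d (tProj d a i) j)

lemma tSwap_tProj_tProj_assoc (d : ℕ) (a : A) (i j : Fin (d + 1)) {c : A} (g : a ⟶ c) :
    tSwap d a ≫ tProj d _ i ≫ tProj d a j ≫ g = tProj d _ j ≫ tProj d a i ≫ g := by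
  rw [← Category.assoc (tProj d _ i), ← Category.assoc, tSwap_tProj_tProj, Category.assoc]

lemma tSwap_naturality (d : ℕ) {a b : A} (f : a ⟶ b) :
    (tFun A d).map ((tFun A d).map f) ≫ tSwap d b = tSwap d a ≫ (tFun A d).map ((tFun A d).map f) :=
  tFun_hom_ext₂ d fun i j => by
    simp only [Category.assoc, tSwap_tProj_tProj, tSwap_tProj_tProj_assoc, tFun_map_tProj,
      tFun_map_tProj_assoc]

lemma tSwap_tSwap (d : ℕ) (a : A) : tSwap d a ≫ tSwap d a = 𝟙 _ :=
  tFun_hom_ext₂ d fun i j => by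
    simp only [Category.assoc, tSwap_tProj_tProj, Category.id_comp]

lemma tFun_map_uNat_app_tSwap (d : ℕ) (I : Finset (Fin (d + 1))) (a : A) :
    (tFun A d).map ((uNat A d I).app a) ≫ tSwap d a = (uNat A d I).app ((tFun A d).obj a) := by
  refine tFun_hom_ext₂ d fun i j => ?_
  simp only [Category.assoc, tSwap_tProj_tProj, tFun_map_tProj_assoc, uNat_app_tProj,
    uNat_app_tProj_assoc]
  split_ifs <;> simp

@[simps] def gammaNat (d : ℕ) (F : A ⥤ D) :
    tFun A d ⋙ tFun A d ⋙ F ⟶ tFun A d ⋙ tFun A d ⋙ F where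
  app a := F.map (tSwap d a)
  naturality _ _ f := by
    simp only [Functor.comp_map, ← F.map_comp, tSwap_naturality]

lemma gammaNat_comp_gammaNat (d : ℕ) (F : A ⥤ D) : gammaNat d F ≫ gammaNat d F = 𝟙 _ := by
  ext a
  simp only [NatTrans.comp_app, gammaNat_app, ← F.map_comp, tSwap_tSwap, F.map_id,
    NatTrans.id_app, Functor.comp_obj]

lemma crNat_comp_gammaNat (d : ℕ) [Preadditive D] (F : A ⥤ D) :
    crNat d (tFun A d ⋙ F) ≫ gammaNat d F = Functor.whiskerLeft (tFun A d) (crNat d F) := by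
  ext a
  simp only [NatTrans.comp_app, crNat_app, gammaNat_app, Functor.whiskerLeft_app,
    Preadditive.sum_comp, Preadditive.zsmul_comp, Functor.comp_map, ← F.map_comp,
    tFun_map_uNat_app_tSwap]

lemma whiskerLeft_crNat_comp_gammaNat (d : ℕ) [Preadditive D] (F : A ⥤ D) :
    Functor.whiskerLeft (tFun A d) (crNat d F) ≫ gammaNat d F = crNat d (tFun A d ⋙ F) := by
  rw [← crNat_comp_gammaNat, Category.assoc, gammaNat_comp_gammaNat, Category.comp_id]

lemma uNat_app_eq_zero_or_isSplitMono (d : ℕ) (I : Finset (Fin (d + 1))) (a : A) :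
    (uNat A d I).app a = 0 ∨ IsSplitMono ((uNat A d I).app a) := by
  rcases I.eq_empty_or_nonempty with rfl | ⟨i, hi⟩
  · exact Or.inl (tFun_hom_ext d fun j => by
      simp only [uNat_app_tProj, Finset.notMem_empty, if_false, zero_comp])
  · exact Or.inr ⟨⟨tProj d a i, (uNat_app_tProj d I a i).trans (if_pos hi)⟩⟩

@[simps] def tM0 (d : ℕ) : M0 A ⥤ M0 A where
  obj a := (tFun A d).obj a
  map f := ⟨(tFun A d).map f.1,
    f.2.imp (fun h => by rw [h]; exact (tFun A d).map_zero _ _)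
      fun h => ⟨⟨h.exists_splitMono.some.map (tFun A d)⟩⟩⟩
  map_id _ := Subtype.ext ((tFun A d).map_id _)
  map_comp _ _ := Subtype.ext ((tFun A d).map_comp _ _)

@[simps] def uM0 (d : ℕ) (I : Finset (Fin (d + 1))) : 𝟭 (M0 A) ⟶ tM0 d where
  app a := ⟨(uNat A d I).app a, uNat_app_eq_zero_or_isSplitMono (A := A) d I a⟩
  naturality _ _ f := Subtype.ext ((uNat A d I).naturality f.1)

lemma whiskerLeft_incl_crNat_comp_whiskerLeft_tM0 (d : ℕ) [Preadditive D] {G H : A ⥤ D}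
    (r : M0.incl A ⋙ G ⟶ M0.incl A ⋙ H) :
    Functor.whiskerLeft (M0.incl A) (crNat d G) ≫ Functor.whiskerLeft (tM0 d) r =
      r ≫ Functor.whiskerLeft (M0.incl A) (crNat d H) := by
  ext a
  change (crNat d G).app ((M0.incl A).obj a) ≫ r.app ((tM0 d).obj a) =
    r.app a ≫ (crNat d H).app ((M0.incl A).obj a)
  simp only [crNat_app]
  refine (Preadditive.sum_comp _ _ _).trans
    ((Finset.sum_congr rfl fun I _ => ?_).trans (Preadditive.comp_sum _ _ _).symm)
  refine (Preadditive.zsmul_comp _ _ _).trans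
    ((congrArg _ ?_).trans (Preadditive.comp_zsmul _ _ _).symm)
  exact r.naturality ((uM0 d I).app a)

variable {k : Type} [CommRing k]

/-- `τ_d` on functors `M₀(A) ⥤ k-Mod`: `t_d` maps zero morphisms and split monos to such. -/
def tauM0Map (d : ℕ) {G H : A ⥤ ModuleCat k} (r : (theta A k).obj G ⟶ (theta A k).obj H) :
    (theta A k).obj (tFun A d ⋙ G) ⟶ (theta A k).obj (tFun A d ⋙ H) :=
  Functor.whiskerLeft (tM0 d) r

lemma tauM0Map_comp (d : ℕ) {G H K : A ⥤ ModuleCat k} (r : (theta A k).obj G ⟶ (theta A k).obj H)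
    (s : (theta A k).obj H ⟶ (theta A k).obj K) :
    tauM0Map d (r ≫ s) = tauM0Map d r ≫ tauM0Map d s :=
  Functor.whiskerLeft_comp _ r s

lemma tauM0Map_id (d : ℕ) (G : A ⥤ ModuleCat k) : tauM0Map d (𝟙 ((theta A k).obj G)) = 𝟙 _ :=
  Functor.whiskerLeft_id' _

lemma tauM0Map_theta_map (d : ℕ) {G H : A ⥤ ModuleCat k} (η : G ⟶ H) :
    tauM0Map d ((theta A k).map η) = (theta A k).map (Functor.whiskerLeft (tFun A d) η) :=
  rfl

lemma theta_map_crNat_comp_tauM0Map (d : ℕ) {G H : A ⥤ ModuleCat k}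
    (r : (theta A k).obj G ⟶ (theta A k).obj H) :
    (theta A k).map (crNat d G) ≫ tauM0Map d r = r ≫ (theta A k).map (crNat d H) :=
  whiskerLeft_incl_crNat_comp_whiskerLeft_tM0 d r

def tauRetraction (d : ℕ) (F : A ⥤ ModuleCat k)
    (rF : (theta A k).obj (tFun A d ⋙ F) ⟶ (theta A k).obj F) :
    (theta A k).obj (tFun A d ⋙ (tFun A d ⋙ F)) ⟶ (theta A k).obj (tFun A d ⋙ F) :=
  (theta A k).map (gammaNat d F) ≫ tauM0Map d rF

lemma theta_map_crNat_comp_tauRetraction (d : ℕ) (F : A ⥤ ModuleCat k)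
    (rF : (theta A k).obj (tFun A d ⋙ F) ⟶ (theta A k).obj F)
    (hrF : (theta A k).map (crNat d F) ≫ rF = 𝟙 _) :
    (theta A k).map (crNat d (tFun A d ⋙ F)) ≫ tauRetraction d F rF = 𝟙 _ := by
  rw [tauRetraction, ← Category.assoc, ← Functor.map_comp, crNat_comp_gammaNat,
    ← tauM0Map_theta_map, ← tauM0Map_comp, hrF, tauM0Map_id]

lemma theta_map_whiskerLeft_crNat_comp_tauRetraction (d : ℕ) (F : A ⥤ ModuleCat k)
    (rF : (theta A k).obj (tFun A d ⋙ F) ⟶ (theta A k).obj F) :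
    (theta A k).map (Functor.whiskerLeft (tFun A d) (crNat d F)) ≫ tauRetraction d F rF =
      rF ≫ (theta A k).map (crNat d F) := by
  rw [tauRetraction, ← Category.assoc, ← Functor.map_comp, whiskerLeft_crNat_comp_gammaNat,
    theta_map_crNat_comp_tauM0Map]

end

noncomputable section

variable {k : Type} [CommRing k] {A : Type} [SmallCategory A] [Preadditive A]
  [Limits.HasFiniteBiproducts A]

/-- If `F` satisfies `(RM)^d` then so does `τ_d F`, with retractions chosen so that
`cr_d(F) : F ⟶ τ_d F` is `(RM)^d`-compatible. -/
theorem stmt9 (d : ℕ) (F : A ⥤ ModuleCat k)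
    (rF : (theta A k).obj (tFun A d ⋙ F) ⟶ (theta A k).obj F)
    (hrF : (theta A k).map (crNat d F) ≫ rF = 𝟙 _) :
    ∃ r' : (theta A k).obj (tFun A d ⋙ (tFun A d ⋙ F)) ⟶ (theta A k).obj (tFun A d ⋙ F),
      (theta A k).map (crNat d (tFun A d ⋙ F)) ≫ r' = 𝟙 _ ∧
      (theta A k).map (Functor.whiskerLeft (tFun A d) (crNat d F)) ≫ r' =
        rF ≫ (theta A k).map (crNat d F) := by
  exact ⟨tauRetraction d F rF, theta_map_crNat_comp_tauRetraction d F rF hrF,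
    theta_map_whiskerLeft_crNat_comp_tauRetraction d F rF⟩

end
end
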